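/- For all linear forms L₁, …, L₅ ∈ ℂ³ and the symmetric tensor F : (Fin 3)⁴ → ℂ defined by F(i,j,k,l) = Σ_{ν=1}^{5} (L_ν)_i (L_ν)_j (L_ν)_k (L_ν)_l, the contraction P(F) associated to the block list (0,1,2), (0,1,2), (0,3,4), (0,3,5), (1,3,5), (1,4,5), (2,3,4), (2,4,5) on vertex set {0,1,2,3,4,5} equals 0. Here P(F) = Σ_φ (Π_{b=1}^{8} ε(φ(b,1), φ(b,2), φ(b,3))) · (Π_{v=0}^{5} F(φ(v₁), φ(v₂), φ(v₃), φ(v₄))), the sum running over all assignments φ of an index in {1,2,3} to each of the 24 slots, where (v₁,v₂,v₃,v₄) are the four slots containing vertex v. -/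
import Mathlib


/-- The Levi-Civita symbol on `n` indices. -/
noncomputable def eps {n : ℕ} (f : Fin n → Fin n) : ℂ :=
  if h : Function.Bijective f then ((Equiv.Perm.sign (Equiv.ofBijective f h) : ℤ) : ℂ) else 0

/-- The eight ordered blocks `(0,1,2), (0,1,2), (0,3,4), (0,3,5), (1,3,5),
(1,4,5), (2,3,4), (2,4,5)` on vertex set `{0,…,5}`. -/
def B : Fin 8 → Fin 3 → Fin 6 :=
  ![![0, 1, 2], ![0, 1, 2], ![0, 3, 4], ![0, 3, 5],
    ![1, 3, 5], ![1, 4, 5], ![2, 3, 4], ![2, 4, 5]]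

/-- The four slots `(b, k)` (block index, position) containing each vertex
`v ∈ Fin 6`, i.e. `B (slots v i).1 (slots v i).2 = v`. -/
def slots : Fin 6 → Fin 4 → Fin 8 × Fin 3 :=
  ![![(0, 0), (1, 0), (2, 0), (3, 0)],
    ![(0, 1), (1, 1), (4, 0), (5, 0)],
    ![(0, 2), (1, 2), (6, 0), (7, 0)],
    ![(2, 1), (3, 1), (4, 1), (6, 1)],
    ![(2, 2), (5, 1), (6, 2), (7, 1)],
    ![(3, 2), (4, 2), (5, 2), (7, 2)]]

lemma eps_comp_swap {n : ℕ} (ψ : Fin n → Fin n) {i j : Fin n} (hij : i ≠ j) :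
    eps (ψ ∘ Equiv.swap i j) = - eps ψ := by
  by_cases hb : Function.Bijective ψ
  · have hb2 : Function.Bijective (ψ ∘ Equiv.swap i j) :=
      hb.comp (Equiv.swap i j).bijective
    rw [eps, dif_pos hb2, eps, dif_pos hb]
    have heq : Equiv.ofBijective _ hb2 = Equiv.ofBijective ψ hb * Equiv.swap i j := by
      ext x; rfl
    rw [heq, map_mul, Equiv.Perm.sign_swap hij]
    push_cast
    ring
  · have hb2 : ¬ Function.Bijective (ψ ∘ Equiv.swap i j) := by
      intro h
      have := h.comp (Equiv.swap i j).bijective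
      have he : (ψ ∘ Equiv.swap i j) ∘ (Equiv.swap i j : Fin n → Fin n) = ψ := by
        funext x; simp [Function.comp, Equiv.swap_apply_self]
      rw [he] at this
      exact hb this
    rw [eps, dif_neg hb2, eps, dif_neg hb, neg_zero]

/-- If two of the three rows coincide, the Levi-Civita contraction vanishes. -/
lemma sum_eps_eq_zero (v : Fin 3 → Fin 3 → ℂ) {i j : Fin 3} (hij : i ≠ j)
    (hv : v i = v j) :
    ∑ ψ : Fin 3 → Fin 3, eps ψ * ∏ k, v k (ψ k) = 0 := by
  set S := ∑ ψ : Fin 3 → Fin 3, eps ψ * ∏ k, v k (ψ k) with hS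
  have hvswap : ∀ k, v (Equiv.swap i j k) = v k := by
    intro k
    rcases eq_or_ne k i with rfl | hki
    · rw [Equiv.swap_apply_left, hv]
    rcases eq_or_ne k j with rfl | hkj
    · rw [Equiv.swap_apply_right, hv]
    · rw [Equiv.swap_apply_of_ne_of_ne hki hkj]
  have hprod : ∀ ψ : Fin 3 → Fin 3,
      (∏ k, v k ((ψ ∘ Equiv.swap i j) k)) = ∏ k, v k (ψ k) := by
    intro ψ
    have := Equiv.prod_comp (Equiv.swap i j) (fun k => v (Equiv.swap i j k) (ψ k))
    calc (∏ k, v k ((ψ ∘ Equiv.swap i j) k))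
        = ∏ k, v (Equiv.swap i j (Equiv.swap i j k)) (ψ (Equiv.swap i j k)) := by
          simp [Function.comp, Equiv.swap_apply_self]
      _ = ∏ k, v (Equiv.swap i j k) (ψ k) := this
      _ = ∏ k, v k (ψ k) := by simp [hvswap]
  have hcomp : ∑ ψ : Fin 3 → Fin 3,
      (eps (ψ ∘ Equiv.swap i j) * ∏ k, v k ((ψ ∘ Equiv.swap i j) k)) = S := by
    have := Equiv.sum_comp ((Equiv.swap i j).arrowCongr (Equiv.refl (Fin 3)))
      (fun ψ : Fin 3 → Fin 3 => eps ψ * ∏ k, v k (ψ k))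
    have happ : ∀ ψ : Fin 3 → Fin 3,
        ((Equiv.swap i j).arrowCongr (Equiv.refl (Fin 3))) ψ = ψ ∘ Equiv.swap i j := by
      intro ψ; funext x
      simp [Equiv.arrowCongr, Equiv.symm_swap, Function.comp]
    simpa only [happ] using this
  have hneg : S = -S := by
    rw [hS]
    calc ∑ ψ : Fin 3 → Fin 3, eps ψ * ∏ k, v k (ψ k)
        = ∑ ψ : Fin 3 → Fin 3,
            (eps (ψ ∘ Equiv.swap i j) * ∏ k, v k ((ψ ∘ Equiv.swap i j) k)) := hcomp.symm
      _ = ∑ ψ : Fin 3 → Fin 3, -(eps ψ * ∏ k, v k (ψ k)) := by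
          refine Finset.sum_congr rfl fun ψ _ => ?_
          rw [eps_comp_swap ψ hij, hprod, neg_mul]
      _ = -S := by rw [Finset.sum_neg_distrib, hS]
  have h2 : (2 : ℂ) * S = 0 := by linear_combination hneg
  rcases mul_eq_zero.mp h2 with h | h
  · norm_num at h
  · exact h

/-- The degree 6 invariant of ternary quartics with symbolic expression
`(abc)²(ade)(adf)(bdf)(bef)(cde)(cef)` vanishes on every quartic which is a sum
of five fourth powers of linear forms. -/
theorem ternary_quartic_invariant_vanishes_on_five_powers (L : Fin 5 → Fin 3 → ℂ) :
    ∑ φ : Fin 8 × Fin 3 → Fin 3,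
      (∏ b : Fin 8, eps fun k => φ (b, k)) *
        ∏ v : Fin 6,
          (∑ ν : Fin 5,
            L ν (φ (slots v 0)) * L ν (φ (slots v 1)) *
              L ν (φ (slots v 2)) * L ν (φ (slots v 3))) = 0 := by
  have compat : ∀ (v : Fin 6) (i : Fin 4), B (slots v i).1 (slots v i).2 = v := by decide
  have hbij : Function.Bijective (fun p : Fin 6 × Fin 4 => slots p.1 p.2) := by decide
  have pair : ∀ v w : Fin 6, v ≠ w →
      ∃ b : Fin 8, ∃ k k' : Fin 3, k ≠ k' ∧ B b k = v ∧ B b k' = w := by decide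
  have expand : ∀ φ : Fin 8 × Fin 3 → Fin 3,
      (∏ v : Fin 6, ∑ ν : Fin 5,
        L ν (φ (slots v 0)) * L ν (φ (slots v 1)) * L ν (φ (slots v 2)) * L ν (φ (slots v 3)))
      = ∑ g : Fin 6 → Fin 5, ∏ v : Fin 6,
        L (g v) (φ (slots v 0)) * L (g v) (φ (slots v 1)) *
          L (g v) (φ (slots v 2)) * L (g v) (φ (slots v 3)) := by
    intro φ
    rw [Finset.prod_univ_sum, Fintype.piFinset_univ]
  have inner : ∀ g : Fin 6 → Fin 5,
      ∑ φ : Fin 8 × Fin 3 → Fin 3,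
        (∏ b : Fin 8, eps fun k => φ (b, k)) *
          ∏ v : Fin 6, (L (g v) (φ (slots v 0)) * L (g v) (φ (slots v 1)) *
            L (g v) (φ (slots v 2)) * L (g v) (φ (slots v 3))) = 0 := by
    intro g
    have hterm : ∀ φ : Fin 8 × Fin 3 → Fin 3,
        (∏ b : Fin 8, eps fun k => φ (b, k)) *
          ∏ v : Fin 6, (L (g v) (φ (slots v 0)) * L (g v) (φ (slots v 1)) *
            L (g v) (φ (slots v 2)) * L (g v) (φ (slots v 3)))
        = ∏ b : Fin 8, ((eps fun k => φ (b, k)) * ∏ k : Fin 3, L (g (B b k)) (φ (b, k))) := by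
      intro φ
      conv_rhs => rw [Finset.prod_mul_distrib]
      congr 1
      calc ∏ v : Fin 6, (L (g v) (φ (slots v 0)) * L (g v) (φ (slots v 1)) *
            L (g v) (φ (slots v 2)) * L (g v) (φ (slots v 3)))
          = ∏ v : Fin 6, ∏ i : Fin 4, L (g v) (φ (slots v i)) := by
            refine Finset.prod_congr rfl fun v _ => ?_
            rw [Fin.prod_univ_four]
        _ = ∏ p : Fin 6 × Fin 4, L (g p.1) (φ (slots p.1 p.2)) := by
            rw [Fintype.prod_prod_type]
        _ = ∏ q : Fin 8 × Fin 3, L (g (B q.1 q.2)) (φ q) := by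
            refine Fintype.prod_bijective _ hbij _ _ fun p => ?_
            rw [compat p.1 p.2]
        _ = ∏ b : Fin 8, ∏ k : Fin 3, L (g (B b k)) (φ (b, k)) := by
            rw [Fintype.prod_prod_type]
    simp only [hterm]
    have hcurry : ∑ φ : Fin 8 × Fin 3 → Fin 3,
        ∏ b : Fin 8, ((eps fun k => φ (b, k)) * ∏ k : Fin 3, L (g (B b k)) (φ (b, k)))
        = ∑ Φ : Fin 8 → Fin 3 → Fin 3,
          ∏ b : Fin 8, (eps (Φ b) * ∏ k : Fin 3, L (g (B b k)) (Φ b k)) :=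
      Fintype.sum_bijective Function.curry (Equiv.curry _ _ _).bijective _ _ (fun φ => rfl)
    rw [hcurry]
    have hfact : ∑ Φ : Fin 8 → Fin 3 → Fin 3,
        ∏ b : Fin 8, (eps (Φ b) * ∏ k : Fin 3, L (g (B b k)) (Φ b k))
        = ∏ b : Fin 8, ∑ ψ : Fin 3 → Fin 3, eps ψ * ∏ k : Fin 3, L (g (B b k)) (ψ k) := by
      rw [Finset.prod_univ_sum, Fintype.piFinset_univ]
    rw [hfact]
    obtain ⟨v, w, hvw, hg⟩ := Fintype.exists_ne_map_eq_of_card_lt g (by simp)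
    obtain ⟨b, k, k', hkk, hbv, hbw⟩ := pair v w hvw
    refine Finset.prod_eq_zero (Finset.mem_univ b) ?_
    exact sum_eps_eq_zero _ hkk (by rw [hbv, hbw, hg])
  calc ∑ φ : Fin 8 × Fin 3 → Fin 3,
      (∏ b : Fin 8, eps fun k => φ (b, k)) *
        ∏ v : Fin 6,
          (∑ ν : Fin 5,
            L ν (φ (slots v 0)) * L ν (φ (slots v 1)) *
              L ν (φ (slots v 2)) * L ν (φ (slots v 3)))
      = ∑ φ : Fin 8 × Fin 3 → Fin 3, ∑ g : Fin 6 → Fin 5,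
        (∏ b : Fin 8, eps fun k => φ (b, k)) *
          ∏ v : Fin 6, (L (g v) (φ (slots v 0)) * L (g v) (φ (slots v 1)) *
            L (g v) (φ (slots v 2)) * L (g v) (φ (slots v 3))) := by
        refine Finset.sum_congr rfl fun φ _ => ?_
        rw [expand φ, Finset.mul_sum]
    _ = ∑ g : Fin 6 → Fin 5, ∑ φ : Fin 8 × Fin 3 → Fin 3,
        (∏ b : Fin 8, eps fun k => φ (b, k)) *
          ∏ v : Fin 6, (L (g v) (φ (slots v 0)) * L (g v) (φ (slots v 1)) *
            L (g v) (φ (slots v 2)) * L (g v) (φ (slots v 3))) := Finset.sum_comm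
    _ = 0 := Finset.sum_eq_zero fun g _ => inner g
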